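/- Let c > 0, K > 0, G > 0 and an integer N ≥ 1. Let g : [0,1]³ → ℝ³ be K-Lipschitz with ‖g(z)‖ ≤ G for all z ∈ [0,1]³, let z : [0,c] → [0,1]³ satisfy z_t = z_0 + ∫_0^t g(z_s) ds for all t ∈ [0,c], and let (Z_n)_{0 ≤ n ≤ ⌊cN⌋} be a sequence in [0,1]³ and (A_k)_{1 ≤ k ≤ ⌊cN⌋} a sequence in ℝ³ such that Z_n = Z_0 + Σ_{k=1}^n A_k + (1/N) Σ_{k=0}^{n−1} g(Z_k) for all 0 ≤ n ≤ ⌊cN⌋. Then for all t ∈ [0,c], ‖Z_{⌊Nt⌋} − z_t‖ ≤ ( ‖Z_0 − z_0‖ + max_{0 ≤ n ≤ ⌊cN⌋} ‖Σ_{k=1}^n A_k‖ + G/N ) e^{Kt}. -/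

import Mathlib

/-!
Put `φ t = ‖Z ⌊N t⌋ - z t‖` and `a = ‖Z 0 - z 0‖ + max_{n ≤ ⌊c N⌋} ‖∑_{k=1}^n A k‖ + G/N`.
The Euler sum `(1/N) ∑_{k<n} g (Z k)` is the integral of the step function `s ↦ g (Z ⌊N s⌋)`
over `[0, n/N]`. So, with `n = ⌊N t⌋`, `Z n - z t` is the initial error, plus `∑_{k=1}^n A k`,
plus `∫₀ᵗ (g (Z ⌊N s⌋) - g (z s)) ds`, of norm at most `K ∫₀ᵗ φ` by the Lipschitz bound, minus
the integral of the step function over `[n/N, t]`, of norm at most `G/N`. Hence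
`φ t ≤ a + K ∫₀ᵗ φ`; as `φ` is right-continuous, `∫₀ᵗ φ` has right derivative `φ t`, and
Grönwall's inequality gives `φ t ≤ a e^{K t}`.
-/

/-- The Euclidean norm on `ℝ³`. -/
noncomputable def norm3 (p : ℝ × ℝ × ℝ) : ℝ :=
  Real.sqrt (p.1 ^ 2 + p.2.1 ^ 2 + p.2.2 ^ 2)

/-- The unit box `[0,1]³`. -/
def unitBox : Set (ℝ × ℝ × ℝ) :=
  Set.Icc (0 : ℝ) 1 ×ˢ Set.Icc (0 : ℝ) 1 ×ˢ Set.Icc (0 : ℝ) 1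

open MeasureTheory Set Filter Topology Real

section NatFloor

variable {E : Type*} [NormedAddCommGroup E]

theorem integrableOn_Icc_comp_natFloor (u : ℕ → E) (a b : ℝ) :
    IntegrableOn (fun x : ℝ => u ⌊x⌋₊) (Icc a b) := by
  refine Measure.integrableOn_of_bounded (M := ∑ k ∈ Finset.range (⌊b⌋₊ + 1), ‖u k‖)
    measure_Icc_lt_top.ne
    ((StronglyMeasurable.of_discrete (f := u)).comp_measurable
      Nat.measurable_floor).aestronglyMeasurable
    ((ae_restrict_iff' measurableSet_Icc).2 (ae_of_all _ fun x hx => ?_))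
  exact Finset.single_le_sum (f := fun k => ‖u k‖) (fun _ _ => norm_nonneg _)
    (Finset.mem_range_succ_iff.2 (Nat.floor_le_floor hx.2))

theorem intervalIntegrable_comp_natFloor_mul (u : ℕ → E) (c a b : ℝ) :
    IntervalIntegrable (fun x : ℝ => u ⌊c * x⌋₊) volume a b := by
  rcases eq_or_ne c 0 with rfl | hc
  · simp
  simpa [hc] using
    ((integrableOn_Icc_comp_natFloor u _ _).intervalIntegrable
      (a := c * a) (b := c * b)).comp_mul_left (c := c)

theorem integral_comp_natFloor [NormedSpace ℝ E] [CompleteSpace E] (u : ℕ → E) (n : ℕ) :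
    ∫ x in (0 : ℝ)..n, u ⌊x⌋₊ = ∑ k ∈ Finset.range n, u k := by
  induction n with
  | zero => simp
  | succ n ih =>
    have hstep : ∫ x in (n : ℝ)..(n + 1 : ℕ), u ⌊x⌋₊ = u n := by
      have hae : ∀ᵐ x : ℝ, x ≠ (n + 1 : ℕ) := by simp [ae_iff, measure_singleton]
      rw [intervalIntegral.integral_congr_ae (g := fun _ => u n) ?_,
        intervalIntegral.integral_const]
      · simp
      filter_upwards [hae] with x hne hx
      rw [uIoc_of_le (by simp)] at hx
      push_cast at hx hne
      rw [Nat.floor_eq_on_Ico n x ⟨hx.1.le, lt_of_le_of_ne hx.2 hne⟩]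
    have hint : ∀ a b : ℝ, IntervalIntegrable (fun x : ℝ => u ⌊x⌋₊) volume a b := by
      simpa using intervalIntegrable_comp_natFloor_mul u 1
    rw [Finset.sum_range_succ, ← ih, ← hstep,
      intervalIntegral.integral_add_adjacent_intervals (hint _ _) (hint _ _)]

theorem integral_comp_natFloor_mul [NormedSpace ℝ E] [CompleteSpace E] (u : ℕ → E) {N : ℕ}
    (hN : N ≠ 0) (n : ℕ) :
    ∫ x in (0 : ℝ)..n / N, u ⌊N * x⌋₊ = (N : ℝ)⁻¹ • ∑ k ∈ Finset.range n, u k := by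
  rw [intervalIntegral.integral_comp_mul_left (fun x => u ⌊x⌋₊) (Nat.cast_ne_zero.2 hN), mul_zero,
    mul_div_cancel₀ _ (Nat.cast_ne_zero.2 hN), integral_comp_natFloor]

theorem continuousWithinAt_comp_natFloor_mul_Ici {X : Type*} [TopologicalSpace X] (u : ℕ → X)
    {c : ℝ} (hc : 0 ≤ c) (x : ℝ) : ContinuousWithinAt (fun y => u ⌊c * y⌋₊) (Ici x) x := by
  have hlt : ∀ᶠ y in 𝓝 x, c * y < ⌊c * x⌋₊ + 1 :=
    (continuous_const.mul continuous_id).continuousAt.eventually_lt continuousAt_const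
      (Nat.lt_floor_add_one _)
  refine continuousWithinAt_const.congr_of_eventuallyEq ?_ rfl
  filter_upwards [nhdsWithin_le_nhds hlt, self_mem_nhdsWithin] with y hy hxy
  refine congrArg u (le_antisymm ?_ (Nat.floor_le_floor (mul_le_mul_of_nonneg_left hxy hc)))
  exact Nat.lt_add_one_iff.1 ((Nat.floor_lt' (Nat.succ_ne_zero _)).2 (by exact_mod_cast hy))

end NatFloor

section IntegralEquation

variable {E : Type*} [NormedAddCommGroup E]

theorem integrableOn_Ioc_of_norm_le_of_forall_lt {f : ℝ → E} {a b C : ℝ}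
    (hbd : ∀ t ∈ Ioo a b, ‖f t‖ ≤ C) (hf : ∀ t < b, IntegrableOn f (Ioc a t)) :
    IntegrableOn f (Ioc a b) := by
  have hU : (⋃ n : ℕ, Ioc a (b - 1 / (n + 1))) = Ioo a b := by
    ext s
    simp only [mem_iUnion, mem_Ioc, mem_Ioo]
    constructor
    · rintro ⟨n, has, hsb⟩
      exact ⟨has, hsb.trans_lt (sub_lt_self _ Nat.one_div_pos_of_nat)⟩
    · rintro ⟨has, hsb⟩
      obtain ⟨n, hn⟩ := exists_nat_one_div_lt (sub_pos.2 hsb)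
      exact ⟨n, has, by linarith⟩
  have hm : AEStronglyMeasurable f (volume.restrict (Ioo a b)) := by
    rw [← hU, aestronglyMeasurable_iUnion_iff]
    exact fun n => (hf _ (sub_lt_self _ Nat.one_div_pos_of_nat)).aestronglyMeasurable
  have hIoo : IntegrableOn f (Ioo a b) :=
    Integrable.mono' (integrable_const C) hm (ae_restrict_of_forall_mem measurableSet_Ioo hbd)
  exact hIoo.congr_set_ae Ioo_ae_eq_Ioc.symm

/-- Without integrability the integral equation would carry no information (the integral is `0`);
past the supremum of the times up to which `F ∘ y` is integrable, `y` is therefore constant. -/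
theorem integrableOn_comp_of_eq_add_integral [NormedSpace ℝ E] {F : E → E} {y : ℝ → E} {c C : ℝ}
    (hbd : ∀ t ∈ Icc 0 c, ‖F (y t)‖ ≤ C)
    (hy : ∀ t ∈ Icc 0 c, y t = y 0 + ∫ τ in (0 : ℝ)..t, F (y τ)) :
    IntegrableOn (fun t => F (y t)) (Icc 0 c) := by
  rcases lt_or_ge c 0 with hc | hc
  · simp [Icc_eq_empty_of_lt hc]
  rw [integrableOn_Icc_iff_integrableOn_Ioc]
  set S := {t ∈ Icc 0 c | IntegrableOn (fun t => F (y t)) (Ioc 0 t)}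
  have h0S : (0 : ℝ) ∈ S := ⟨left_mem_Icc.2 hc, by simp⟩
  have hS : BddAbove S := ⟨c, fun t ht => ht.1.2⟩
  have hσ0 : 0 ≤ sSup S := le_csSup hS h0S
  have hσc : sSup S ≤ c := csSup_le ⟨0, h0S⟩ fun t ht => ht.1.2
  have hbefore : IntegrableOn (fun t => F (y t)) (Ioc 0 (sSup S)) := by
    refine integrableOn_Ioc_of_norm_le_of_forall_lt
      (fun t ht => hbd t ⟨ht.1.le, ht.2.le.trans hσc⟩) fun t ht => ?_
    obtain ⟨s, hs, hts⟩ := exists_lt_of_lt_csSup ⟨0, h0S⟩ ht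
    exact hs.2.mono_set (Ioc_subset_Ioc_right hts.le)
  have hafter : EqOn (fun t => F (y t)) (fun _ => F (y 0)) (Ioc (sSup S) c) := by
    intro t ht
    have ht' : t ∈ Icc 0 c := ⟨hσ0.trans ht.1.le, ht.2⟩
    have hnot : ¬IntervalIntegrable (fun t => F (y t)) volume 0 t := fun hint =>
      (not_le.2 ht.1)
        (le_csSup hS ⟨ht', (intervalIntegrable_iff_integrableOn_Ioc_of_le ht'.1).1 hint⟩)
    simp only [hy t ht', intervalIntegral.integral_undef hnot, add_zero]
  rw [← Ioc_union_Ioc_eq_Ioc hσ0 hσc]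
  exact hbefore.union ((integrableOn_congr_fun hafter measurableSet_Ioc).2
    (integrableOn_const measure_Ioc_lt_top.ne))

theorem continuousOn_of_eq_add_integral [NormedSpace ℝ E] {F : E → E} {y : ℝ → E} {c C : ℝ}
    (hbd : ∀ t ∈ Icc 0 c, ‖F (y t)‖ ≤ C)
    (hy : ∀ t ∈ Icc 0 c, y t = y 0 + ∫ τ in (0 : ℝ)..t, F (y τ)) :
    ContinuousOn y (Icc 0 c) := by
  rcases lt_or_ge c 0 with hc | hc
  · simp [Icc_eq_empty_of_lt hc]
  have hint := integrableOn_comp_of_eq_add_integral hbd hy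
  rw [← uIcc_of_le hc] at hint ⊢
  refine ((continuousOn_const (c := y 0)).add
    (intervalIntegral.continuousOn_primitive_interval hint)).congr fun t ht => ?_
  exact hy t (uIcc_of_le hc ▸ ht)

end IntegralEquation

theorem mul_gronwallBound_zero_left (K ε x : ℝ) :
    K * gronwallBound 0 K ε x = ε * (exp (K * x) - 1) := by
  rcases eq_or_ne K 0 with rfl | hK
  · simp [gronwallBound_K0]
  · rw [gronwallBound_of_K_ne_0 hK]
    field_simp
    ring

theorem le_mul_exp_of_le_add_mul_integral {φ : ℝ → ℝ} {a K c : ℝ} (hK : 0 ≤ K)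
    (hint : IntegrableOn φ (Icc 0 c)) (hcont : ∀ t ∈ Ico 0 c, ContinuousWithinAt φ (Ici t) t)
    (hle : ∀ t ∈ Icc 0 c, φ t ≤ a + K * ∫ s in (0 : ℝ)..t, φ s) :
    ∀ t ∈ Icc 0 c, φ t ≤ a * exp (K * t) := by
  rcases lt_or_ge c 0 with hc | hc
  · simp [Icc_eq_empty_of_lt hc]
  set ψ : ℝ → ℝ := fun t => ∫ s in (0 : ℝ)..t, φ s
  have hψcont : ContinuousOn ψ (Icc 0 c) := by
    rw [← uIcc_of_le hc] at hint ⊢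
    exact intervalIntegral.continuousOn_primitive_interval hint
  have hψderiv : ∀ t ∈ Ico 0 c, HasDerivWithinAt ψ (φ t) (Ici t) t := fun t ht =>
    intervalIntegral.integral_hasDerivWithinAt_right
      ((intervalIntegrable_iff_integrableOn_Icc_of_le ht.1).2
        (hint.mono_set (Icc_subset_Icc_right ht.2.le)))
      (AEStronglyMeasurable.stronglyMeasurableAtFilter_of_mem
        (hint.mono_set (Ioo_subset_Icc_self.trans (Icc_subset_Icc_left ht.1))).aestronglyMeasurable
        (Ioo_mem_nhdsGT ht.2))
      ((hcont t ht).mono Ioi_subset_Ici_self)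
  have hψ : ∀ t ∈ Icc 0 c, ψ t ≤ gronwallBound 0 K a (t - 0) :=
    le_gronwallBound_of_liminf_deriv_right_le hψcont
      (fun t ht _ hr => (hψderiv t ht).liminf_right_slope_le hr) (by simp [ψ])
      fun t ht => by linarith [hle t (Ico_subset_Icc_self ht)]
  intro t ht
  calc φ t ≤ a + K * ψ t := hle t ht
    _ ≤ a + K * gronwallBound 0 K a t := by
      gcongr
      simpa using hψ t ht
    _ = a * exp (K * t) := by rw [mul_gronwallBound_zero_left]; ring

theorem Finset.le_ciSup_of_mem {α ι : Type*} [ConditionallyCompleteLattice α] [Nonempty α]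
    (s : Finset ι) (f : ι → α) {i : ι} (hi : i ∈ s) : f i ≤ ⨆ j ∈ s, f j := by
  refine le_ciSup₂ (f := fun j (_ : j ∈ s) => f j) ((s.finite_toSet.image f).bddAbove.mono ?_) i hi
  simp only [iUnion_subset_iff, range_subset_iff]
  exact fun j hj => ⟨j, hj, rfl⟩

section EulerScheme

variable {E : Type*} [NormedAddCommGroup E] [NormedSpace ℝ E] [CompleteSpace E]
  {D : Set E} {g : E → E} {K G c : ℝ} {N : ℕ} {z : ℝ → E} {Z A : ℕ → E}

theorem eulerScheme_sub_eq (hN : N ≠ 0) {t : ℝ}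
    (hzt : z t = z 0 + ∫ τ in (0 : ℝ)..t, g (z τ))
    (hZt : Z ⌊N * t⌋₊ = Z 0 + (∑ k ∈ Finset.Icc 1 ⌊N * t⌋₊, A k) +
      (1 / (N : ℝ)) • ∑ k ∈ Finset.range ⌊N * t⌋₊, g (Z k))
    (hf : IntervalIntegrable (fun s => g (z s)) volume 0 t) :
    Z ⌊N * t⌋₊ - z t = (Z 0 - z 0) + (∑ k ∈ Finset.Icc 1 ⌊N * t⌋₊, A k) +
      (∫ s in (0 : ℝ)..t, (g (Z ⌊N * s⌋₊) - g (z s))) -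
      ∫ s in (⌊N * t⌋₊ / N : ℝ)..t, g (Z ⌊N * s⌋₊) := by
  have hh := intervalIntegrable_comp_natFloor_mul (fun k => g (Z k)) N
  rw [hZt, hzt, one_div, ← integral_comp_natFloor_mul (fun k => g (Z k)) hN,
    ← intervalIntegral.integral_interval_sub_left (hh 0 t) (hh 0 (⌊N * t⌋₊ / N)),
    intervalIntegral.integral_sub (hh _ _) hf]
  abel

theorem norm_eulerScheme_sub_le_add_mul_integral (hN : N ≠ 0) (hG : 0 ≤ G)
    (hLip : ∀ p ∈ D, ∀ q ∈ D, ‖g p - g q‖ ≤ K * ‖p - q‖) (hbd : ∀ p ∈ D, ‖g p‖ ≤ G)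
    (hzmem : ∀ t ∈ Icc 0 c, z t ∈ D)
    (hz : ∀ t ∈ Icc 0 c, z t = z 0 + ∫ τ in (0 : ℝ)..t, g (z τ))
    (hZmem : ∀ n ≤ ⌊c * N⌋₊, Z n ∈ D)
    (hZ : ∀ n ≤ ⌊c * N⌋₊, Z n = Z 0 + (∑ k ∈ Finset.Icc 1 n, A k) +
      (1 / (N : ℝ)) • ∑ k ∈ Finset.range n, g (Z k))
    (hf : IntegrableOn (fun s => g (z s)) (Icc 0 c))
    (hφ : IntegrableOn (fun s : ℝ => ‖Z ⌊N * s⌋₊ - z s‖) (Icc 0 c)) {t : ℝ} (ht : t ∈ Icc 0 c) :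
    ‖Z ⌊N * t⌋₊ - z t‖ ≤
      (‖Z 0 - z 0‖ + (⨆ n ∈ Finset.Iic ⌊c * N⌋₊, ‖∑ k ∈ Finset.Icc 1 n, A k‖) + G / N) +
        K * ∫ s in (0 : ℝ)..t, ‖Z ⌊N * s⌋₊ - z s‖ := by
  have hfloor : ∀ s ≤ c, ⌊N * s⌋₊ ≤ ⌊c * N⌋₊ := fun s hs =>
    Nat.floor_le_floor (by rw [mul_comm]; gcongr)
  have hIcc : Icc 0 t ⊆ Icc 0 c := Icc_subset_Icc_right ht.2
  have hnt : (⌊N * t⌋₊ / N : ℝ) ≤ t := div_le_of_le_mul₀ (by positivity) ht.1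
    (by rw [mul_comm]; exact Nat.floor_le (by positivity [ht.1]))
  have hsum : ‖∑ k ∈ Finset.Icc 1 ⌊N * t⌋₊, A k‖ ≤
      ⨆ n ∈ Finset.Iic ⌊c * N⌋₊, ‖∑ k ∈ Finset.Icc 1 n, A k‖ :=
    Finset.le_ciSup_of_mem _ (fun n => ‖∑ k ∈ Finset.Icc 1 n, A k‖)
      (Finset.mem_Iic.2 (hfloor t ht.2))
  have hdrift : ‖∫ s in (0 : ℝ)..t, (g (Z ⌊N * s⌋₊) - g (z s))‖ ≤
      K * ∫ s in (0 : ℝ)..t, ‖Z ⌊N * s⌋₊ - z s‖ := by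
    rw [← intervalIntegral.integral_const_mul]
    refine intervalIntegral.norm_integral_le_of_norm_le ht.1 (ae_of_all _ fun s hs =>
      hLip _ (hZmem _ (hfloor s (hs.2.trans ht.2))) _ (hzmem s (hIcc (Ioc_subset_Icc_self hs))))
      (((intervalIntegrable_iff_integrableOn_Icc_of_le ht.1).2 (hφ.mono_set hIcc)).const_mul K)
  have hlast : ‖∫ s in (⌊N * t⌋₊ / N : ℝ)..t, g (Z ⌊N * s⌋₊)‖ ≤ G / N := by
    refine (intervalIntegral.norm_integral_le_of_norm_le_const fun s hs =>
      hbd _ (hZmem _ (hfloor s ?_))).trans ?_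
    · exact (uIoc_of_le hnt ▸ hs).2.trans ht.2
    rw [abs_of_nonneg (sub_nonneg.2 hnt), div_eq_mul_one_div G]
    refine mul_le_mul_of_nonneg_left ?_ hG
    rw [sub_le_iff_le_add', ← add_div, le_div_iff₀ (by positivity), mul_comm]
    exact (Nat.lt_floor_add_one ((N : ℝ) * t)).le
  rw [eulerScheme_sub_eq hN (hz t ht) (hZ _ (hfloor t ht.2))
    ((intervalIntegrable_iff_integrableOn_Icc_of_le ht.1).2 (hf.mono_set hIcc))]
  calc _ ≤ ‖Z 0 - z 0‖ + ‖∑ k ∈ Finset.Icc 1 ⌊N * t⌋₊, A k‖ +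
        ‖∫ s in (0 : ℝ)..t, (g (Z ⌊N * s⌋₊) - g (z s))‖ +
        ‖∫ s in (⌊N * t⌋₊ / N : ℝ)..t, g (Z ⌊N * s⌋₊)‖ :=
        (norm_sub_le _ _).trans (by gcongr; exact norm_add₃_le)
    _ ≤ _ := by linarith

theorem norm_eulerScheme_sub_le (hN : N ≠ 0) (hK : 0 ≤ K) (hG : 0 ≤ G)
    (hLip : ∀ p ∈ D, ∀ q ∈ D, ‖g p - g q‖ ≤ K * ‖p - q‖) (hbd : ∀ p ∈ D, ‖g p‖ ≤ G)
    (hzmem : ∀ t ∈ Icc 0 c, z t ∈ D)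
    (hz : ∀ t ∈ Icc 0 c, z t = z 0 + ∫ τ in (0 : ℝ)..t, g (z τ))
    (hZmem : ∀ n ≤ ⌊c * N⌋₊, Z n ∈ D)
    (hZ : ∀ n ≤ ⌊c * N⌋₊, Z n = Z 0 + (∑ k ∈ Finset.Icc 1 n, A k) +
      (1 / (N : ℝ)) • ∑ k ∈ Finset.range n, g (Z k)) :
    ∀ t ∈ Icc 0 c, ‖Z ⌊N * t⌋₊ - z t‖ ≤
      (‖Z 0 - z 0‖ + (⨆ n ∈ Finset.Iic ⌊c * N⌋₊, ‖∑ k ∈ Finset.Icc 1 n, A k‖) + G / N) *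
        exp (K * t) := by
  have hgz : ∀ t ∈ Icc 0 c, ‖g (z t)‖ ≤ G := fun t ht => hbd _ (hzmem t ht)
  have hzc : ContinuousOn z (Icc 0 c) := continuousOn_of_eq_add_integral hgz hz
  have hφ : IntegrableOn (fun s : ℝ => ‖Z ⌊N * s⌋₊ - z s‖) (Icc 0 c) :=
    ((((intervalIntegrable_iff' (by finiteness)).1
      (intervalIntegrable_comp_natFloor_mul Z N 0 c)).mono_set
      Icc_subset_uIcc).sub hzc.integrableOn_Icc).norm
  refine le_mul_exp_of_le_add_mul_integral hK hφ (fun t ht => ?_) fun t ht =>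
    norm_eulerScheme_sub_le_add_mul_integral hN hG hLip hbd hzmem hz hZmem hZ
      (integrableOn_comp_of_eq_add_integral hgz hz) hφ ht
  exact ((continuousWithinAt_comp_natFloor_mul_Ici Z N.cast_nonneg t).sub
    ((hzc t (Ico_subset_Icc_self ht)).mono_of_mem_nhdsWithin (Icc_mem_nhdsGE_of_mem ht))).norm

end EulerScheme

noncomputable def toEuclidean3 : (ℝ × ℝ × ℝ) ≃L[ℝ] EuclideanSpace ℝ (Fin 3) :=
  LinearEquiv.toContinuousLinearEquiv
    { toFun := fun p => !₂[p.1, p.2.1, p.2.2]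
      invFun := fun v => (v 0, v 1, v 2)
      map_add' := fun p q => by ext i; fin_cases i <;> simp
      map_smul' := fun r p => by ext i; fin_cases i <;> simp
      left_inv := fun p => by simp
      right_inv := fun v => by ext i; fin_cases i <;> simp }

theorem norm_toEuclidean3 (p : ℝ × ℝ × ℝ) : ‖toEuclidean3 p‖ = norm3 p := by
  simp [toEuclidean3, norm3, EuclideanSpace.norm_eq, Fin.sum_univ_three]

theorem ContinuousLinearEquiv.intervalIntegral_comp_comm {E F : Type*} [NormedAddCommGroup E]
    [NormedSpace ℝ E] [NormedAddCommGroup F] [NormedSpace ℝ F] (L : E ≃L[ℝ] F) (f : ℝ → E)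
    {a b : ℝ} : ∫ x in a..b, L (f x) = L (∫ x in a..b, f x) := by
  simp_rw [intervalIntegral, L.integral_comp_comm, map_sub]

theorem discrete_gronwall_comparison_general
    (c K G : ℝ) (hK : 0 < K) (hG : 0 < G)
    (N : ℕ) (hN : 1 ≤ N)
    (g : ℝ × ℝ × ℝ → ℝ × ℝ × ℝ)
    (hLip : ∀ p ∈ unitBox, ∀ q ∈ unitBox, norm3 (g p - g q) ≤ K * norm3 (p - q))
    (hbd : ∀ p ∈ unitBox, norm3 (g p) ≤ G)
    (z : ℝ → ℝ × ℝ × ℝ)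
    (hzmem : ∀ t ∈ Set.Icc (0 : ℝ) c, z t ∈ unitBox)
    (hz : ∀ t ∈ Set.Icc (0 : ℝ) c, z t = z 0 + ∫ τ in (0 : ℝ)..t, g (z τ))
    (Z : ℕ → ℝ × ℝ × ℝ) (A : ℕ → ℝ × ℝ × ℝ)
    (hZmem : ∀ n ≤ ⌊c * (N : ℝ)⌋₊, Z n ∈ unitBox)
    (hZ : ∀ n ≤ ⌊c * (N : ℝ)⌋₊,
      Z n = Z 0 + (∑ k ∈ Finset.Icc 1 n, A k) +
        (1 / (N : ℝ)) • ∑ k ∈ Finset.range n, g (Z k)) :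
    ∀ t ∈ Set.Icc (0 : ℝ) c,
      norm3 (Z ⌊(N : ℝ) * t⌋₊ - z t) ≤
        (norm3 (Z 0 - z 0) +
            (⨆ n ∈ Finset.Iic ⌊c * (N : ℝ)⌋₊, norm3 (∑ k ∈ Finset.Icc 1 n, A k)) +
            G / N) * Real.exp (K * t) := by
  have key := norm_eulerScheme_sub_le (D := toEuclidean3.symm ⁻¹' unitBox)
    (g := fun p => toEuclidean3 (g (toEuclidean3.symm p))) (z := fun t => toEuclidean3 (z t))
    (Z := fun n => toEuclidean3 (Z n)) (A := fun n => toEuclidean3 (A n))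
    (by omega : N ≠ 0) hK.le hG.le
    (fun p hp q hq => by
      simpa only [← norm_toEuclidean3, map_sub, ContinuousLinearEquiv.apply_symm_apply]
        using hLip _ hp _ hq)
    (fun p hp => by simpa only [← norm_toEuclidean3] using hbd _ hp)
    (fun t ht => by simpa using hzmem t ht)
    (fun t ht => by
      rw [hz t ht]
      simp only [map_add, ← toEuclidean3.intervalIntegral_comp_comm,
        ContinuousLinearEquiv.symm_apply_apply])
    (fun n hn => by simpa using hZmem n hn)
    (fun n hn => by
      rw [hZ n hn]
      simp only [map_add, map_smul, map_sum, ContinuousLinearEquiv.symm_apply_apply])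
  simpa only [← map_sub, ← map_sum, norm_toEuclidean3] using key

/-- Deterministic Gronwall-type comparison between the discrete evolution
`Z_n = Z_0 + Σ_{k=1}^n A_k + (1/N) Σ_{k=0}^{n−1} g(Z_k)` and the continuous one
`z_t = z_0 + ∫_0^t g(z_s) ds`, for a `K`-Lipschitz drift `g` bounded by `G` on `[0,1]³`:
for all `t ∈ [0,c]`,
`‖Z_{⌊Nt⌋} − z_t‖ ≤ (‖Z_0 − z_0‖ + max_{n ≤ ⌊cN⌋} ‖Σ_{k=1}^n A_k‖ + G/N) e^{Kt}`. -/
theorem discrete_gronwall_comparison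
    (c K G : ℝ) (hc : 0 < c) (hK : 0 < K) (hG : 0 < G)
    (N : ℕ) (hN : 1 ≤ N)
    (g : ℝ × ℝ × ℝ → ℝ × ℝ × ℝ)
    (hLip : ∀ p ∈ unitBox, ∀ q ∈ unitBox, norm3 (g p - g q) ≤ K * norm3 (p - q))
    (hbd : ∀ p ∈ unitBox, norm3 (g p) ≤ G)
    (z : ℝ → ℝ × ℝ × ℝ)
    (hzmem : ∀ t ∈ Set.Icc (0 : ℝ) c, z t ∈ unitBox)
    (hz : ∀ t ∈ Set.Icc (0 : ℝ) c, z t = z 0 + ∫ τ in (0 : ℝ)..t, g (z τ))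
    (Z : ℕ → ℝ × ℝ × ℝ) (A : ℕ → ℝ × ℝ × ℝ)
    (hZmem : ∀ n ≤ ⌊c * (N : ℝ)⌋₊, Z n ∈ unitBox)
    (hZ : ∀ n ≤ ⌊c * (N : ℝ)⌋₊,
      Z n = Z 0 + (∑ k ∈ Finset.Icc 1 n, A k) +
        (1 / (N : ℝ)) • ∑ k ∈ Finset.range n, g (Z k)) :
    ∀ t ∈ Set.Icc (0 : ℝ) c,
      norm3 (Z ⌊(N : ℝ) * t⌋₊ - z t) ≤
        (norm3 (Z 0 - z 0) +
            (⨆ n ∈ Finset.Iic ⌊c * (N : ℝ)⌋₊, norm3 (∑ k ∈ Finset.Icc 1 n, A k)) +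
            G / N) * Real.exp (K * t) :=
  discrete_gronwall_comparison_general c K G hK hG N hN g hLip hbd z hzmem hz Z A hZmem hZ
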